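/- arXiv:1803.10984 — 4 statements merged into one kernel-verified Lean document; each statement's English description precedes it below -/
import Mathlib

section
/- The map F₁(x,y) = (x²+y, y²+x, xy) from ℂ² to ℂ³ has exactly three singular points, namely (ε/2, ε²/2) for each cube root of unity ε, where a singular point is a point at which all three 2×2 minors of the Jacobian matrix vanish. -/
open Complex

/-- The components of `F₁(x,y) = (x²+y, y²+x, xy)`. -/
noncomputable def F1c1 (p : ℂ × ℂ) : ℂ := p.1 ^ 2 + p.2
noncomputable def F1c2 (p : ℂ × ℂ) : ℂ := p.2 ^ 2 + p.1
noncomputable def F1c3 (p : ℂ × ℂ) : ℂ := p.1 * p.2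

/-- The 2×2 Jacobian minor `det ∂(g,h)/∂(x,y)` at a point `p`. -/
noncomputable def Jminor (g h : ℂ × ℂ → ℂ) (p : ℂ × ℂ) : ℂ :=
  deriv (fun t => g (t, p.2)) p.1 * deriv (fun t => h (p.1, t)) p.2 -
    deriv (fun t => g (p.1, t)) p.2 * deriv (fun t => h (t, p.2)) p.1

/-!
The three minors of `F₁` are `x - 2y²`, `y - 2x²` and `4xy - 1`. On their common zero set,
`ε := 2x` satisfies `ε³ = 8x³ = 4x · 2x² = 4xy = 1` and `y = 2x² = ε²/2`.
-/

lemma Jminor_F1c2_F1c3 (p : ℂ × ℂ) : Jminor F1c2 F1c3 p = p.1 - 2 * p.2 ^ 2 := by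
  simp only [Jminor, F1c2, F1c3]
  rw [deriv_const_add, deriv_id'', deriv_const_mul_field, deriv_id'',
    deriv_add_const, deriv_pow_field, deriv_mul_const_field, deriv_id'']
  ring

lemma Jminor_F1c3_F1c1 (p : ℂ × ℂ) : Jminor F1c3 F1c1 p = p.2 - 2 * p.1 ^ 2 := by
  simp only [Jminor, F1c3, F1c1]
  rw [deriv_mul_const_field, deriv_id'', deriv_const_add, deriv_id'',
    deriv_const_mul_field, deriv_id'', deriv_add_const, deriv_pow_field]
  ring

lemma Jminor_F1c1_F1c2 (p : ℂ × ℂ) : Jminor F1c1 F1c2 p = 4 * p.1 * p.2 - 1 := by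
  simp only [Jminor, F1c1, F1c2]
  rw [deriv_add_const, deriv_pow_field, deriv_add_const, deriv_pow_field,
    deriv_const_add, deriv_id'', deriv_const_add, deriv_id'']
  ring

theorem critical_system_iff_eq_cube_root {K : Type*} [Field K] (h2 : (2 : K) ≠ 0) (x y : K) :
    (x - 2 * y ^ 2 = 0 ∧ y - 2 * x ^ 2 = 0 ∧ 4 * x * y - 1 = 0) ↔
      ∃ ε : K, ε ^ 3 = 1 ∧ (x, y) = (ε / 2, ε ^ 2 / 2) := by
  constructor
  · rintro ⟨-, hy, hxy⟩
    refine ⟨2 * x, by linear_combination -4 * x * hy + hxy, Prod.ext ?_ ?_⟩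
    · field_simp
    · field_simp
      linear_combination hy
  · rintro ⟨ε, hε, ⟨⟩⟩
    refine ⟨?_, ?_, ?_⟩
    · field_simp
      linear_combination (-ε) * hε
    · field_simp
      ring
    · field_simp
      linear_combination 4 * hε

/-- The singular points of `F₁ = (x²+y, y²+x, xy)` are exactly the points
`(ε/2, ε²/2)` with `ε³ = 1`. -/
theorem stmt0 (p : ℂ × ℂ) :
    (Jminor F1c2 F1c3 p = 0 ∧ Jminor F1c3 F1c1 p = 0 ∧ Jminor F1c1 F1c2 p = 0) ↔
      ∃ ε : ℂ, ε ^ 3 = 1 ∧ p = (ε / 2, ε ^ 2 / 2) := by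
  rw [Jminor_F1c2_F1c3, Jminor_F1c3_F1c1, Jminor_F1c1_F1c2]
  exact critical_system_iff_eq_cube_root two_ne_zero p.1 p.2
end

section
/- The map F₁(x,y) = (x²+y, y²+x, xy) : ℂ² → ℂ³ has topological degree 1, i.e. for every point p outside a proper algebraic subset of ℂ², the fiber F₁⁻¹(F₁(p)) is a single point. Concretely: if F₁(x₁,y₁) = F₁(x₂,y₂) and (x₁,y₁) does not lie on any of the three lines x + ε²y − ε = 0 (ε³ = 1), then (x₁,y₁) = (x₂,y₂). -/
/-- `F₁(x,y) = (x²+y, y²+x, xy)`. -/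
noncomputable def F1 (p : ℂ × ℂ) : ℂ × ℂ × ℂ :=
  (p.1 ^ 2 + p.2, p.2 ^ 2 + p.1, p.1 * p.2)

/-- `F₁` has topological degree one: if `F₁ p = F₁ q` and `p` lies on none of
the three lines `x + ε² y − ε = 0` (`ε³ = 1`), then `p = q`. -/
theorem stmt3 (p q : ℂ × ℂ) (h : F1 p = F1 q)
    (hp : ∀ ε : ℂ, ε ^ 3 = 1 → p.1 + ε ^ 2 * p.2 - ε ≠ 0) : p = q := by
  obtain ⟨a, b⟩ := p
  obtain ⟨c, d⟩ := q
  simp only [F1, Prod.mk.injEq] at h ⊢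
  obtain ⟨h1, h2, h3⟩ := h
  simp only at hp
  by_cases hac : a = c
  · subst hac
    constructor
    · rfl
    · linear_combination h1
  by_cases hbd : b = d
  · subst hbd
    exact absurd (by linear_combination h2) hac
  exfalso
  have hu : a - c ≠ 0 := sub_ne_zero.mpr hac
  have hv : b - d ≠ 0 := sub_ne_zero.mpr hbd
  have key : (a - c) * (b - d) * ((a + c) * (b + d) - 1) = 0 := by
    linear_combination (b ^ 2 - d ^ 2) * h1 + (d - b) * h2
  have hst : (a + c) * (b + d) = 1 := by
    rcases mul_eq_zero.mp key with h' | h'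
    · rcases mul_eq_zero.mp h' with h'' | h''
      · exact absurd h'' hu
      · exact absurd h'' hv
    · linear_combination h'
  have k2 : (a - c) * ((b + d) - (a + c) ^ 2) = 0 := by
    linear_combination 2 * h3 - (a + c) * h1
  have ht : b + d = (a + c) ^ 2 := by
    rcases mul_eq_zero.mp k2 with h' | h'
    · exact absurd h' hu
    · linear_combination h'
  have heps : (a + c) ^ 3 = 1 := by
    linear_combination hst - (a + c) * ht
  have hd : d = (a + c) ^ 2 - b := by linear_combination ht
  subst hd
  exact hp (a + c) heps (by linear_combination (a + c) * h3 + c * heps)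
end

section
/- For F₅ = (x², y², x+y) : ℂ² → ℂ³, if L is an affine automorphism of ℂ³ and R an affine automorphism of ℂ² with L ∘ F₅ ∘ R = F₅, then R(x,y) = (αx, αy) or R(x,y) = (αy, αx) for some α ∈ ℂ*. -/
/-- `F₅(x,y) = (x², y², x+y)`. -/
noncomputable def F5 (p : ℂ × ℂ) : ℂ × ℂ × ℂ := (p.1 ^ 2, p.2 ^ 2, p.1 + p.2)

/-- If `(L,R)` stabilizes `F₅`, then `R` is `(x,y) ↦ (αx, αy)` or
`(x,y) ↦ (αy, αx)` for some nonzero `α`. -/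
theorem stmt11 (L : (ℂ × ℂ × ℂ) ≃ᵃ[ℂ] (ℂ × ℂ × ℂ)) (R : (ℂ × ℂ) ≃ᵃ[ℂ] (ℂ × ℂ))
    (h : ∀ p : ℂ × ℂ, L (F5 (R p)) = F5 p) :
    ∃ α : ℂ, α ≠ 0 ∧
      ((∀ p : ℂ × ℂ, R p = (α * p.1, α * p.2)) ∨
        (∀ p : ℂ × ℂ, R p = (α * p.2, α * p.1))) := by
  set a := (R.linear ((1 : ℂ), (0 : ℂ))).1 with ha
  set c := (R.linear ((1 : ℂ), (0 : ℂ))).2 with hc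
  set b := (R.linear ((0 : ℂ), (1 : ℂ))).1 with hb
  set d := (R.linear ((0 : ℂ), (1 : ℂ))).2 with hd
  set e := (R ((0 : ℂ), (0 : ℂ))).1 with he
  set f := (R ((0 : ℂ), (0 : ℂ))).2 with hf
  have hR : ∀ x y : ℂ, R (x, y) = (a * x + b * y + e, c * x + d * y + f) := by
    intro x y
    have h1 : ((x, y) : ℂ × ℂ) = ((x,y) : ℂ × ℂ) +ᵥ ((0,0) : ℂ × ℂ) := by simp [vadd_eq_add]
    rw [h1, AffineEquiv.map_vadd]
    have h2 : ((x,y) : ℂ × ℂ) = x • ((1 : ℂ), (0 : ℂ)) + y • ((0 : ℂ), (1 : ℂ)) := by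
      simp [Prod.ext_iff]
    rw [h2, map_add, map_smul, map_smul]
    simp only [vadd_eq_add, Prod.ext_iff, Prod.fst_add, Prod.snd_add, Prod.smul_fst,
      Prod.smul_snd, smul_eq_mul]
    constructor <;> ring
  have key : ∀ x y z : ℂ × ℂ × ℂ, L (x + y - z) = L x + L y - L z := by
    intro x y z
    have h1 : x + y - z = (x - z) +ᵥ y := by simp [vadd_eq_add]; abel
    have h2 := AffineMap.linearMap_vsub L.toAffineMap x z
    simp only [vsub_eq_sub, AffineEquiv.coe_toAffineMap, AffineEquiv.coe_linear,
      LinearEquiv.coe_coe] at h2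
    rw [h1, AffineEquiv.map_vadd]
    simp only [vadd_eq_add]
    rw [h2]; abel
  have hB : F5 (R (1, -1)) = F5 (R (-1, 1)) := by
    apply L.injective
    rw [h, h]
    norm_num [F5, Prod.ext_iff]
  have hA : F5 (R (1, 1)) + F5 (R (0, 0)) - F5 (R (1, 0)) = F5 (R (0, 1)) := by
    apply L.injective
    rw [key, h, h, h, h]
    norm_num [F5, Prod.ext_iff]
  simp only [hR, F5, Prod.ext_iff, Prod.fst_add, Prod.snd_add, Prod.fst_sub, Prod.snd_sub] at hA hB
  obtain ⟨hA1, hA2, hA3⟩ := hA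
  obtain ⟨hB1, hB2, hB3⟩ := hB
  have hab : a * b = 0 := by linear_combination hA1 / 2
  have hcd : c * d = 0 := by linear_combination hA2 / 2
  have hsum : a + c = b + d := by linear_combination hB3 / 2
  have hae : e * (a - b) = 0 := by linear_combination hB1 / 4
  have hcf : f * (c - d) = 0 := by linear_combination hB2 / 4
  have hinj := R.injective
  have hx : ¬ (a = 0 ∧ c = 0) := by
    rintro ⟨h1, h2⟩
    have : R ((0:ℂ), (0:ℂ)) = R ((1:ℂ), (0:ℂ)) := by rw [hR, hR]; simp [h1, h2]
    have := hinj this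
    simp [Prod.ext_iff] at this
  have hy : ¬ (b = 0 ∧ d = 0) := by
    rintro ⟨h1, h2⟩
    have : R ((0:ℂ), (0:ℂ)) = R ((0:ℂ), (1:ℂ)) := by rw [hR, hR]; simp [h1, h2]
    have := hinj this
    simp [Prod.ext_iff] at this
  rcases mul_eq_zero.1 hab with ha0 | hb0
  · rcases mul_eq_zero.1 hcd with hc0 | hd0
    · exact absurd ⟨ha0, hc0⟩ hx
    · -- a = 0, d = 0 : antidiagonal, α = b
      have hbc : c = b := by linear_combination hsum - ha0 + hd0
      have hbne : b ≠ 0 := fun hb0 => hx ⟨ha0, hbc.trans hb0⟩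
      have he0 : e = 0 := by
        rcases mul_eq_zero.1 hae with h1 | h2
        · exact h1
        · exact absurd (show b = 0 by linear_combination ha0 - h2) hbne
      have hf0 : f = 0 := by
        rcases mul_eq_zero.1 hcf with h1 | h2
        · exact h1
        · exact absurd (show b = 0 by linear_combination h2 + hd0 - hbc) hbne
      refine ⟨b, hbne, Or.inr fun p => ?_⟩
      have := hR p.1 p.2
      rw [Prod.mk.eta] at this
      rw [this, ha0, hd0, he0, hf0, hbc]
      simp only [Prod.mk.injEq]
      constructor <;> ring
  · rcases mul_eq_zero.1 hcd with hc0 | hd0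
    · -- b = 0, c = 0 : diagonal, α = a
      have had : d = a := by linear_combination -hsum - hb0 + hc0
      have hane : a ≠ 0 := fun ha0 => hx ⟨ha0, hc0⟩
      have he0 : e = 0 := by
        rcases mul_eq_zero.1 hae with h1 | h2
        · exact h1
        · exact absurd (show a = 0 by linear_combination h2 + hb0) hane
      have hf0 : f = 0 := by
        rcases mul_eq_zero.1 hcf with h1 | h2
        · exact h1
        · exact absurd (show a = 0 by linear_combination -h2 + hc0 - had) hane
      refine ⟨a, hane, Or.inl fun p => ?_⟩
      have := hR p.1 p.2
      rw [Prod.mk.eta] at this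
      rw [this, hb0, hc0, he0, hf0, had]
      simp only [Prod.mk.injEq]
      constructor <;> ring
    · exact absurd ⟨hb0, hd0⟩ hy
end

section
/- Every quadratic polynomial map G = (g₁,g₂,g₃,g₄) : ℂ² → ℂ⁴ with g₄ linear (nonconstant) and such that the homogeneous degree-2 parts of g₁, g₂, g₃ are linearly independent, is linearly equivalent to (x²+ay, y², xy, x) for some a ∈ ℂ; hence it is linearly equivalent to (x²+y, y², xy, x) if a ≠ 0 and to (x², y², xy, x) if a = 0. -/
/-!
Choose `p, r` with `p d₄ + r e₄ = 1`; the unimodular substitution `(x, y) ↦ (p x - e₄ y, r x + d₄ y)`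
turns `g₄` into `x + k₄`. It acts on binary quadratic forms by its symmetric square, of determinant
`1³`, so the quadratic parts of `g₁, g₂, g₃` stay a basis of the quadratic forms. Inverting that
basis on the first three coordinates and subtracting multiples of `g₄` leaves
`(x² + αy, xy + βy, y² + γy, x)`, and the translation `(x, y) ↦ (x + β, y + γ/2)` completes the
squares up to terms absorbed by a shear.
-/

/-- Linear (affine) equivalence of polynomial maps `ℂ² → ℂ⁴`. -/
def LinEquiv4 (F G : ℂ × ℂ → ℂ × ℂ × ℂ × ℂ) : Prop :=
  ∃ (L : (ℂ × ℂ × ℂ × ℂ) ≃ᵃ[ℂ] (ℂ × ℂ × ℂ × ℂ)) (R : (ℂ × ℂ) ≃ᵃ[ℂ] (ℂ × ℂ)),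
    ∀ p : ℂ × ℂ, F p = L (G (R p))

open Matrix

section SymmetricSquare

variable {R : Type*} [CommRing R]

def quadMonomials (p : R × R) : Fin 3 → R := ![p.1 ^ 2, p.1 * p.2, p.2 ^ 2]

def symSq (a b c d : R) : Matrix (Fin 3) (Fin 3) R :=
  !![a ^ 2, 2 * a * b, b ^ 2; a * c, a * d + b * c, b * d; c ^ 2, 2 * c * d, d ^ 2]

theorem quadMonomials_linear (a b c d : R) (p : R × R) :
    quadMonomials (a * p.1 + b * p.2, c * p.1 + d * p.2) = symSq a b c d *ᵥ quadMonomials p := by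
  ext i
  fin_cases i <;>
    simp only [quadMonomials, symSq, mulVec, dotProduct, Fin.sum_univ_three, of_apply, cons_val',
      cons_val_zero, cons_val_one, cons_val, cons_val_fin_one, Fin.zero_eta, Fin.mk_one,
      Fin.reduceFinMk] <;>
    ring

theorem det_symSq (a b c d : R) : (symSq a b c d).det = (a * d - b * c) ^ 3 := by
  simp only [symSq, det_fin_three, of_apply, cons_val', cons_val_zero, cons_val_one, cons_val,
    cons_val_fin_one]
  ring

end SymmetricSquare

namespace LinEquiv4

theorem of_eq {F G : ℂ × ℂ → ℂ × ℂ × ℂ × ℂ} (h : ∀ p, F p = G p) : LinEquiv4 F G :=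
  ⟨AffineEquiv.refl ℂ _, AffineEquiv.refl ℂ _, h⟩

theorem symm {F G : ℂ × ℂ → ℂ × ℂ × ℂ × ℂ} (h : LinEquiv4 F G) : LinEquiv4 G F := by
  obtain ⟨L, R, h⟩ := h
  exact ⟨L.symm, R.symm, fun p => by simp [h]⟩

theorem trans {F G H : ℂ × ℂ → ℂ × ℂ × ℂ × ℂ} (h₁ : LinEquiv4 F G) (h₂ : LinEquiv4 G H) :
    LinEquiv4 F H := by
  obtain ⟨L, R, h₁⟩ := h₁
  obtain ⟨L', R', h₂⟩ := h₂
  exact ⟨L'.trans L, R.trans R', fun p => by simp [h₁, h₂]⟩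

end LinEquiv4

-- The last coordinate comes first so that `LinearEquiv.skewProd` shears the others by it.
def splitC4 : (ℂ × ℂ × ℂ × ℂ) ≃ₗ[ℂ] ℂ × (Fin 3 → ℂ) where
  toFun v := (v.2.2.2, ![v.1, v.2.1, v.2.2.1])
  invFun w := (w.2 0, w.2 1, w.2 2, w.1)
  map_add' _ _ := by ext i <;> [rfl; fin_cases i <;> rfl]
  map_smul' _ _ := by ext i <;> [rfl; fin_cases i <;> rfl]
  left_inv _ := rfl
  right_inv w := by ext i <;> [rfl; fin_cases i <;> rfl]

@[simp] theorem splitC4_apply (v : ℂ × ℂ × ℂ × ℂ) :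
    splitC4 v = (v.2.2.2, ![v.1, v.2.1, v.2.2.1]) := rfl

@[simp] theorem splitC4_symm_apply (w : ℂ × (Fin 3 → ℂ)) :
    splitC4.symm w = (w.2 0, w.2 1, w.2 2, w.1) := rfl

noncomputable def triangularAffineEquiv (M : Matrix (Fin 3) (Fin 3) ℂ) (hM : IsUnit M.det)
    (u c : Fin 3 → ℂ) (t : ℂ) : (ℂ × ℂ × ℂ × ℂ) ≃ᵃ[ℂ] (ℂ × ℂ × ℂ × ℂ) :=
  ((splitC4.trans ((LinearEquiv.refl ℂ ℂ).skewProd (M.toLinearEquiv (Pi.basisFun ℂ _) hM)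
    (LinearMap.toSpanSingleton ℂ _ u))).trans splitC4.symm).toAffineEquiv.trans
    (AffineEquiv.constVAdd ℂ _ (splitC4.symm (t, c)))

theorem triangularAffineEquiv_apply (M : Matrix (Fin 3) (Fin 3) ℂ) (hM : IsUnit M.det)
    (u c : Fin 3 → ℂ) (t : ℂ) (v : ℂ × ℂ × ℂ × ℂ) :
    triangularAffineEquiv M hM u c t v =
      splitC4.symm ((splitC4 v).1 + t, M *ᵥ (splitC4 v).2 + (splitC4 v).1 • u + c) := by
  simp only [triangularAffineEquiv, AffineEquiv.trans_apply, LinearEquiv.coe_toAffineEquiv,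
    LinearEquiv.trans_apply, LinearEquiv.skewProd_apply, LinearEquiv.refl_apply,
    toLinearEquiv_apply, toLin_eq_toLin', toLin'_apply, LinearMap.toSpanSingleton_apply,
    AffineEquiv.constVAdd_apply, vadd_eq_add, ← map_add, Prod.mk_add_mk, add_comm t, add_comm c]

def quadMap (Q : Matrix (Fin 3) (Fin 3) ℂ) (β γ δ : Fin 3 → ℂ) (d e k : ℂ) (p : ℂ × ℂ) :
    ℂ × ℂ × ℂ × ℂ :=
  splitC4.symm (d * p.1 + e * p.2 + k, Q *ᵥ quadMonomials p + p.1 • β + p.2 • γ + δ)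

theorem quadMap_linEquiv4_comp_linear (Q : Matrix (Fin 3) (Fin 3) ℂ) (β γ δ : Fin 3 → ℂ)
    {d e p r : ℂ} (k : ℂ) (h : p * d + r * e = 1) :
    LinEquiv4 (quadMap (Q * symSq p (-e) r d) (p • β + r • γ) (d • γ - e • β) δ 1 0 k)
      (quadMap Q β γ δ d e k) := by
  have hdet : (!![p, -e; r, d]).det = 1 := by
    rw [det_fin_two_of]
    linear_combination h
  refine ⟨AffineEquiv.refl ℂ _,
    (toLinearEquiv (Module.Basis.finTwoProd ℂ) _ (hdet ▸ isUnit_one)).toAffineEquiv,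
    fun q => ?_⟩
  simp only [quadMap, AffineEquiv.refl_apply, LinearEquiv.coe_toAffineEquiv,
    toLinearEquiv_apply, toLin_finTwoProd_apply, quadMonomials_linear, mulVec_mulVec]
  congr 1
  refine Prod.ext ?_ ?_
  · linear_combination -q.1 * h
  · module

theorem quadMap_linEquiv4_quadMap_one {Q : Matrix (Fin 3) (Fin 3) ℂ} (hQ : IsUnit Q.det)
    (β γ δ : Fin 3 → ℂ) (k : ℂ) :
    LinEquiv4 (quadMap Q β γ δ 1 0 k) (quadMap 1 0 (Q⁻¹ *ᵥ γ) 0 1 0 0) := by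
  refine ⟨triangularAffineEquiv Q hQ β δ k, AffineEquiv.refl ℂ _, fun q => ?_⟩
  simp only [quadMap, AffineEquiv.refl_apply, triangularAffineEquiv_apply,
    LinearEquiv.apply_symm_apply, one_mulVec, smul_zero, add_zero, zero_mul, one_mul]
  congr 2
  rw [mulVec_add, mulVec_smul, mulVec_mulVec, mul_nonsing_inv _ hQ, one_mulVec]
  abel

theorem quadMap_one_linEquiv4_normalForm (γ : Fin 3 → ℂ) :
    LinEquiv4 (quadMap 1 0 γ 0 1 0 0) (fun p => (p.1 ^ 2 + γ 0 * p.2, p.2 ^ 2, p.1 * p.2, p.1)) := by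
  have hP : IsUnit (!![1, 0, 0; 0, 0, 1; 0, 1, 0] : Matrix (Fin 3) (Fin 3) ℂ).det := by
    simp [det_fin_three]
  refine ⟨triangularAffineEquiv _ hP ![-2 * γ 1, -(γ 2 / 2), 0]
      ![γ 1 ^ 2 - γ 0 * γ 2 / 2, 0, -(γ 2 ^ 2 / 4)] (-γ 1),
    AffineEquiv.constVAdd ℂ _ (γ 1, γ 2 / 2), fun q => ?_⟩
  simp only [quadMap, quadMonomials, triangularAffineEquiv_apply, splitC4_apply, splitC4_symm_apply,
    AffineEquiv.constVAdd_apply, vadd_eq_add, Prod.fst_add, Prod.snd_add, one_mulVec, Pi.add_apply,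
    Pi.smul_apply, Pi.zero_apply, smul_eq_mul, mulVec, dotProduct, Fin.sum_univ_three, of_apply,
    cons_val_zero, cons_val_one, cons_val, Prod.mk.injEq]
  refine ⟨?_, ?_, ?_, ?_⟩ <;> ring

theorem normalForm_linEquiv4_one {a : ℂ} (ha : a ≠ 0) :
    LinEquiv4 (fun p => (p.1 ^ 2 + a * p.2, p.2 ^ 2, p.1 * p.2, p.1))
      (fun p => (p.1 ^ 2 + p.2, p.2 ^ 2, p.1 * p.2, p.1)) := by
  refine LinEquiv4.symm ⟨triangularAffineEquiv (diagonal ![1, a ^ 2, a]) ?_ 0 0 0,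
    (toLinearEquiv (Module.Basis.finTwoProd ℂ) !![1, 0; 0, a⁻¹] ?_).toAffineEquiv,
    fun q => ?_⟩
  · simp [det_diagonal, Fin.prod_univ_three, ha]
  · simp [det_fin_two_of, ha]
  simp only [LinearEquiv.coe_toAffineEquiv, toLinearEquiv_apply, toLin_finTwoProd_apply,
    triangularAffineEquiv_apply, splitC4_apply, splitC4_symm_apply, mulVec_diagonal, Prod.mk.injEq,
    cons_val_zero, cons_val_one, cons_val, smul_zero, add_zero, zero_add, zero_mul, one_mul]
  exact ⟨by field_simp, by field_simp, by field_simp, trivial⟩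

theorem exists_quadMap_linEquiv4_normalForm {Q : Matrix (Fin 3) (Fin 3) ℂ} (hQ : IsUnit Q.det)
    (β γ δ : Fin 3 → ℂ) {d e : ℂ} (k : ℂ) (hde : (d, e) ≠ (0, 0)) :
    ∃ a : ℂ, LinEquiv4 (quadMap Q β γ δ d e k)
      (fun p => (p.1 ^ 2 + a * p.2, p.2 ^ 2, p.1 * p.2, p.1)) := by
  obtain ⟨p, r, hpr⟩ : IsCoprime d e :=
    Semifield.isCoprime_iff.mpr (by rwa [Ne, Prod.mk.injEq, not_and_or] at hde)
  have hS : IsUnit (Q * symSq p (-e) r d).det := by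
    rwa [det_mul, det_symSq, show p * d - -e * r = 1 by linear_combination hpr, one_pow, mul_one]
  exact ⟨_, ((quadMap_linEquiv4_comp_linear Q β γ δ k hpr).symm.trans
    (quadMap_linEquiv4_quadMap_one hS _ _ _ _)).trans (quadMap_one_linEquiv4_normalForm _)⟩

theorem LinEquiv4.normalForm_cases {F : ℂ × ℂ → ℂ × ℂ × ℂ × ℂ} {a : ℂ}
    (h : LinEquiv4 F (fun p => (p.1 ^ 2 + a * p.2, p.2 ^ 2, p.1 * p.2, p.1))) :
    LinEquiv4 F (fun p => (p.1 ^ 2 + a * p.2, p.2 ^ 2, p.1 * p.2, p.1)) ∧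
      (a ≠ 0 → LinEquiv4 F (fun p => (p.1 ^ 2 + p.2, p.2 ^ 2, p.1 * p.2, p.1))) ∧
      (a = 0 → LinEquiv4 F (fun p => (p.1 ^ 2, p.2 ^ 2, p.1 * p.2, p.1))) :=
  ⟨h, fun ha => h.trans (normalForm_linEquiv4_one ha), fun ha => by simpa [ha] using h⟩

/-- Every quadratic map `G = (g₁,g₂,g₃,g₄) : ℂ² → ℂ⁴` whose last component is
linear nonconstant and whose first three components have linearly independent
quadratic parts is linearly equivalent to `(x²+ay, y², xy, x)` for some `a`;
hence to `(x²+y, y², xy, x)` if `a ≠ 0` and to `(x², y², xy, x)` if `a = 0`. -/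
theorem stmt16 (a₁ b₁ c₁ d₁ e₁ k₁ a₂ b₂ c₂ d₂ e₂ k₂ a₃ b₃ c₃ d₃ e₃ k₃ d₄ e₄ k₄ : ℂ)
    (hlin : (d₄, e₄) ≠ (0, 0))
    (hindep : LinearIndependent ℂ ![![a₁, b₁, c₁], ![a₂, b₂, c₂], ![a₃, b₃, c₃]]) :
    ∃ a : ℂ,
      LinEquiv4
        (fun p => (a₁ * p.1 ^ 2 + b₁ * p.1 * p.2 + c₁ * p.2 ^ 2 + d₁ * p.1 + e₁ * p.2 + k₁,
                   a₂ * p.1 ^ 2 + b₂ * p.1 * p.2 + c₂ * p.2 ^ 2 + d₂ * p.1 + e₂ * p.2 + k₂,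
                   a₃ * p.1 ^ 2 + b₃ * p.1 * p.2 + c₃ * p.2 ^ 2 + d₃ * p.1 + e₃ * p.2 + k₃,
                   d₄ * p.1 + e₄ * p.2 + k₄))
        (fun p => (p.1 ^ 2 + a * p.2, p.2 ^ 2, p.1 * p.2, p.1)) ∧
      (a ≠ 0 →
        LinEquiv4
          (fun p => (a₁ * p.1 ^ 2 + b₁ * p.1 * p.2 + c₁ * p.2 ^ 2 + d₁ * p.1 + e₁ * p.2 + k₁,
                     a₂ * p.1 ^ 2 + b₂ * p.1 * p.2 + c₂ * p.2 ^ 2 + d₂ * p.1 + e₂ * p.2 + k₂,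
                     a₃ * p.1 ^ 2 + b₃ * p.1 * p.2 + c₃ * p.2 ^ 2 + d₃ * p.1 + e₃ * p.2 + k₃,
                     d₄ * p.1 + e₄ * p.2 + k₄))
          (fun p => (p.1 ^ 2 + p.2, p.2 ^ 2, p.1 * p.2, p.1))) ∧
      (a = 0 →
        LinEquiv4
          (fun p => (a₁ * p.1 ^ 2 + b₁ * p.1 * p.2 + c₁ * p.2 ^ 2 + d₁ * p.1 + e₁ * p.2 + k₁,
                     a₂ * p.1 ^ 2 + b₂ * p.1 * p.2 + c₂ * p.2 ^ 2 + d₂ * p.1 + e₂ * p.2 + k₂,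
                     a₃ * p.1 ^ 2 + b₃ * p.1 * p.2 + c₃ * p.2 ^ 2 + d₃ * p.1 + e₃ * p.2 + k₃,
                     d₄ * p.1 + e₄ * p.2 + k₄))
          (fun p => (p.1 ^ 2, p.2 ^ 2, p.1 * p.2, p.1))) := by
  have hQ : IsUnit (!![a₁, b₁, c₁; a₂, b₂, c₂; a₃, b₃, c₃]).det :=
    (isUnit_iff_isUnit_det _).mp (linearIndependent_rows_iff_isUnit.mp hindep)
  obtain ⟨a, ha⟩ := exists_quadMap_linEquiv4_normalForm hQ ![d₁, d₂, d₃] ![e₁, e₂, e₃]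
    ![k₁, k₂, k₃] k₄ hlin
  refine ⟨a, LinEquiv4.normalForm_cases ((LinEquiv4.of_eq fun p => ?_).trans ha)⟩
  simp only [quadMap, quadMonomials, splitC4_symm_apply, Pi.add_apply, Pi.smul_apply, smul_eq_mul,
    mulVec, dotProduct, Fin.sum_univ_three, of_apply, cons_val_zero, cons_val_one, cons_val,
    Prod.mk.injEq]
  exact ⟨by ring, by ring, by ring, trivial⟩
end
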